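/- arXiv:2207.03441 — 2 statements merged into one kernel-verified Lean document; each statement's English description precedes it below -/
import Mathlib

section
/- Let ℓ' be a metric on a node set, w > 0 a drone weight, w_i ≥ 0 payloads, and B > 0 a battery capacity. Let π = (i₁, …, i_r) be a feasible sortie, i.e., w·ℓ̄(1, r) + Σ_{p=2}^{r-1} w_{i_p}·ℓ̄(1, p) ≤ B, where ℓ̄(p₁, p₂) = Σ_{q=p₁}^{p₂−1} ℓ'_{i_q i_{q+1}}. Then for every t with 2 ≤ t ≤ r − 1, at least one of the two loop sorties π₁ = (i₁, …, i_t, i₁) and π₂ = (i_r, …, i_t, i_r) is feasible, where the energy of π₁ is w·(ℓ̄(1,t) + ℓ'_{i_t i_1}) + Σ_{p=2}^{t} w_{i_p}·ℓ̄(1,p), and the energy of π₂ is w·(ℓ̄(t,r) + ℓ'_{i_t i_r}) + Σ_{p=t}^{r-1} w_{i_p}·ℓ̄(p,r). -/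
/-- Lemma 3 of the paper: if the sortie (i₁,…,i_r) is feasible, then for every
t with 2 ≤ t ≤ r-1 at least one of the loops (i₁,…,i_t,i₁) and
(i_r,…,i_t,i_r) is feasible. Nodes `node q` live in a metric space; the
partial sum `ℓ̄(p₁,p₂)` is `Σ_{q ∈ [p₁, p₂)} dist (node q) (node (q + 1))`. -/
theorem loop_prefix_or_suffix_feasible
    {α : Type*} [MetricSpace α] (node : ℕ → α) (pay : ℕ → ℝ)
    (w B : ℝ) (hw : 0 < w) (hB : 0 < B) (hpay : ∀ p, 0 ≤ pay p)
    (r : ℕ) (hr : 3 ≤ r) (t : ℕ) (ht : 2 ≤ t) (ht' : t ≤ r - 1)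
    (ℓbar : ℕ → ℕ → ℝ)
    (hℓbar : ∀ p₁ p₂, ℓbar p₁ p₂ = ∑ q ∈ Finset.Ico p₁ p₂, dist (node q) (node (q + 1)))
    (hfeas : w * ℓbar 1 r + ∑ p ∈ Finset.Icc 2 (r - 1), pay p * ℓbar 1 p ≤ B) :
    (w * (ℓbar 1 t + dist (node t) (node 1)) +
        ∑ p ∈ Finset.Icc 2 t, pay p * ℓbar 1 p ≤ B) ∨
      (w * (ℓbar t r + dist (node t) (node r)) +
        ∑ p ∈ Finset.Icc t (r - 1), pay p * ℓbar p r ≤ B) := by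
  have hℓnn : ∀ p₁ p₂, 0 ≤ ℓbar p₁ p₂ := by
    intro p₁ p₂; rw [hℓbar]; exact Finset.sum_nonneg fun q _ => dist_nonneg
  have hsplit : ∀ a b c : ℕ, a ≤ b → b ≤ c → ℓbar a b + ℓbar b c = ℓbar a c := by
    intro a b c hab hbc
    rw [hℓbar, hℓbar, hℓbar]
    exact Finset.sum_Ico_consecutive _ hab hbc
  have h1t : 1 ≤ t := le_trans (by norm_num) ht
  have htr : t ≤ r := le_trans ht' (Nat.sub_le r 1)
  have hdist : ∀ a b : ℕ, a ≤ b → dist (node a) (node b) ≤ ℓbar a b := by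
    intro a b hab
    rw [hℓbar]
    calc dist (node a) (node b)
        = dist (node (a + 0)) (node (a + (b - a))) := by
          rw [Nat.add_zero, Nat.add_sub_cancel' hab]
      _ ≤ ∑ i ∈ Finset.range (b - a),
            dist (node (a + i)) (node (a + (i + 1))) :=
          dist_le_range_sum_dist (fun i => node (a + i)) (b - a)
      _ = ∑ q ∈ Finset.Ico a b, dist (node q) (node (q + 1)) := by
          rw [Finset.sum_Ico_eq_sum_range]
          refine Finset.sum_congr rfl fun i _ => ?_
          simp [Nat.add_assoc]
  have hsum : ℓbar 1 t + ℓbar t r = ℓbar 1 r := hsplit 1 t r h1t htr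
  rcases le_or_gt (ℓbar 1 t) (ℓbar t r) with hcase | hcase
  · left
    have hd : dist (node t) (node 1) ≤ ℓbar 1 t := by
      rw [dist_comm]; exact hdist 1 t h1t
    have h1 : w * (ℓbar 1 t + dist (node t) (node 1)) ≤ w * ℓbar 1 r := by
      apply mul_le_mul_of_nonneg_left _ hw.le
      rw [← hsum]
      exact add_le_add le_rfl (hd.trans hcase)
    have h2 : ∑ p ∈ Finset.Icc 2 t, pay p * ℓbar 1 p ≤
        ∑ p ∈ Finset.Icc 2 (r - 1), pay p * ℓbar 1 p := by
      apply Finset.sum_le_sum_of_subset_of_nonneg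
      · exact Finset.Icc_subset_Icc le_rfl ht'
      · intro p _ _; exact mul_nonneg (hpay p) (hℓnn 1 p)
    linarith
  · right
    have hd : dist (node t) (node r) ≤ ℓbar t r := hdist t r htr
    have h1 : w * (ℓbar t r + dist (node t) (node r)) ≤ w * ℓbar 1 r := by
      apply mul_le_mul_of_nonneg_left _ hw.le
      rw [← hsum]
      have := hd.trans hcase.le
      linarith
    have h2 : ∑ p ∈ Finset.Icc t (r - 1), pay p * ℓbar p r ≤
        ∑ p ∈ Finset.Icc 2 (r - 1), pay p * ℓbar 1 p := by
      calc ∑ p ∈ Finset.Icc t (r - 1), pay p * ℓbar p r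
          ≤ ∑ p ∈ Finset.Icc t (r - 1), pay p * ℓbar 1 p := by
            apply Finset.sum_le_sum
            intro p hp
            rw [Finset.mem_Icc] at hp
            have hpr : p ≤ r := le_trans hp.2 (Nat.sub_le r 1)
            have e1 : ℓbar t p + ℓbar p r = ℓbar t r := hsplit t p r hp.1 hpr
            have e2 : ℓbar 1 t + ℓbar t p = ℓbar 1 p := hsplit 1 t p h1t hp.1
            have hpt : 0 ≤ ℓbar t p := hℓnn t p
            have : ℓbar p r ≤ ℓbar 1 p := by linarith [hcase.le]
            exact mul_le_mul_of_nonneg_left this (hpay p)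
        _ ≤ ∑ p ∈ Finset.Icc 2 (r - 1), pay p * ℓbar 1 p := by
            apply Finset.sum_le_sum_of_subset_of_nonneg
            · exact Finset.Icc_subset_Icc ht le_rfl
            · intro p _ _; exact mul_nonneg (hpay p) (hℓnn 1 p)
    linarith
end

section
/- Let ℓ' be a metric, let (i₁, …, i_r) be a sequence of nodes with partial sums ℓ̄(p₁, p₂) = Σ_{q=p₁}^{p₂−1} ℓ'_{i_q i_{q+1}}, and let 2 ≤ t ≤ r − 1. Assume w > 0, payloads w_{i_p} ≥ 0, and that for every p with t ≤ p ≤ r − 1 both ℓ̄(1, p) ≥ ℓ̄(p, r) and ℓ̄(1, t) ≥ ℓ̄(t, r) hold. Then the energy of the reversed tail loop π₂ = (i_r, …, i_t, i_r), namely w·(ℓ'_{i_t i_r} + ℓ̄(t, r)) + Σ_{p=t}^{r-1} w_{i_p}·ℓ̄(p, r), is at most the energy of the original sortie, namely w·ℓ̄(1, r) + Σ_{p=2}^{r-1} w_{i_p}·ℓ̄(1, p). -/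
/-- Chain of inequalities (11): the energy of the reversed tail loop
(i_r,…,i_t,i_r) is at most the energy of the original sortie, given the
comparison inequalities on the partial sums. -/
theorem reversed_tail_loop_energy_le
    {α : Type*} [MetricSpace α] (node : ℕ → α) (pay : ℕ → ℝ)
    (w : ℝ) (hw : 0 < w) (hpay : ∀ p, 0 ≤ pay p)
    (r t : ℕ) (ht : 2 ≤ t) (ht' : t ≤ r - 1)
    (ℓbar : ℕ → ℕ → ℝ)
    (hℓbar : ∀ p₁ p₂, ℓbar p₁ p₂ = ∑ q ∈ Finset.Ico p₁ p₂, dist (node q) (node (q + 1)))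
    (hcmp : ∀ p, t ≤ p → p ≤ r - 1 → ℓbar p r ≤ ℓbar 1 p)
    (hcmp' : ℓbar t r ≤ ℓbar 1 t) :
    w * (dist (node t) (node r) + ℓbar t r) +
        ∑ p ∈ Finset.Icc t (r - 1), pay p * ℓbar p r ≤
      w * ℓbar 1 r + ∑ p ∈ Finset.Icc 2 (r - 1), pay p * ℓbar 1 p := by
  have hr : t + 1 ≤ r := by omega
  have htr : t ≤ r := by omega
  -- triangle inequality along the path
  have hdist : dist (node t) (node r) ≤ ℓbar t r := by
    rw [hℓbar, Finset.sum_Ico_eq_sum_range]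
    have := dist_le_range_sum_dist (fun q => node (t + q)) (r - t)
    simpa [Nat.add_sub_cancel' htr, add_assoc] using this
  -- splitting the total length
  have hsplit : ℓbar 1 t + ℓbar t r = ℓbar 1 r := by
    rw [hℓbar, hℓbar, hℓbar]
    exact Finset.sum_Ico_consecutive _ (by omega) htr
  have h1 : w * (dist (node t) (node r) + ℓbar t r) ≤ w * ℓbar 1 r := by
    rw [← hsplit]
    have : dist (node t) (node r) + ℓbar t r ≤ ℓbar 1 t + ℓbar t r :=
      add_le_add (hdist.trans hcmp') le_rfl
    exact mul_le_mul_of_nonneg_left this hw.le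
  have h2 : ∑ p ∈ Finset.Icc t (r - 1), pay p * ℓbar p r ≤
      ∑ p ∈ Finset.Icc 2 (r - 1), pay p * ℓbar 1 p := by
    calc ∑ p ∈ Finset.Icc t (r - 1), pay p * ℓbar p r
        ≤ ∑ p ∈ Finset.Icc t (r - 1), pay p * ℓbar 1 p := by
          refine Finset.sum_le_sum fun i hi => ?_
          have hi' := Finset.mem_Icc.mp hi
          exact mul_le_mul_of_nonneg_left (hcmp i hi'.1 hi'.2) (hpay i)
      _ ≤ ∑ p ∈ Finset.Icc 2 (r - 1), pay p * ℓbar 1 p := by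
          refine Finset.sum_le_sum_of_subset_of_nonneg
            (Finset.Icc_subset_Icc_left ht) fun i _ _ => ?_
          refine mul_nonneg (hpay i) ?_
          rw [hℓbar]
          exact Finset.sum_nonneg fun _ _ => dist_nonneg
  exact add_le_add h1 h2
end
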